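/- arXiv:2008.10288 — 2 statements merged into one kernel-verified Lean document; each statement's English description precedes it below -/
import Mathlib

section
/- The map L : ℍ² → 𝕆 defined by L(h₁,h₂) = h₁ + (k h₂ k̄)e is a real-linear isometry satisfying L((h₁,h₂)·i) = L(h₁,h₂)·i, L((h₁,h₂)·j) = L(h₁,h₂)·j, and L((h₁,h₂)·k) = (L(h₁,h₂)·i)·j, where on the left the quaternion acts by componentwise right multiplication. -/
/-!
Right multiplication in `𝕆` by a quaternion `q` acts on `h₁ + h₂e` as `(h₁, h₂) ↦ (h₁q, h₂q̄)`,
while `L` twists the second component by the inner automorphism `x ↦ k x k̄` of `ℍ`. This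
automorphism sends `i ↦ -i = ī`, `j ↦ -j = j̄` and fixes `k = ī j̄`, which gives the three
intertwining identities; it is also norm preserving since `|k| = 1`.
-/

noncomputable section

open Quaternion

/-- The octonions via Cayley–Dickson on ℍ: `x = h₁ + h₂e ↔ (h₁, h₂)`. -/
abbrev Oct := ℍ[ℝ] × ℍ[ℝ]

/-- Cayley–Dickson multiplication. -/
def omul (x y : Oct) : Oct :=
  (x.1 * y.1 - star y.2 * x.2, x.2 * star y.1 + y.2 * x.1)

def qi : ℍ[ℝ] := ⟨0,1,0,0⟩
def qj : ℍ[ℝ] := ⟨0,0,1,0⟩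
def qk : ℍ[ℝ] := ⟨0,0,0,1⟩

/-- The imaginary units i, j of ℍ ⊂ 𝕆. -/
def oi : Oct := (qi, 0)
def oj : Oct := (qj, 0)

/-- The Bryant–Harvey map `L(h₁,h₂) = h₁ + (k h₂ k̄)e`. -/
def Lmap (h : ℍ[ℝ] × ℍ[ℝ]) : Oct := (h.1, qk * h.2 * star qk)

theorem omul_mk_zero (x : Oct) (q : ℍ[ℝ]) : omul x (q, 0) = (x.1 * q, x.2 * star q) := by
  simp [omul]

theorem mul_mul_star_of_star_mul_self {R : Type*} [Monoid R] [Star R] {u : R}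
    (hu : star u * u = 1) (x y : R) :
    u * (x * y) * star u = u * x * star u * (u * y * star u) := by
  simp only [mul_assoc, ← mul_assoc (star u) u, hu, one_mul]

theorem normSq_qk : normSq qk = 1 := by
  simp only [normSq_def']; simp [qk]

theorem star_qk_mul_qk : star qk * qk = 1 := by
  rw [star_mul_self, normSq_qk, coe_one]

theorem qk_mul_qk_mul_star_qk : qk * qk * star qk = qk := by
  rw [mul_assoc, self_mul_star, normSq_qk, coe_one, mul_one]

theorem qk_mul_qi_mul_star_qk : qk * qi * star qk = star qi := by
  ext <;> simp [re_mul, imI_mul, imJ_mul, imK_mul] <;> simp [qi, qk]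

theorem qk_mul_qj_mul_star_qk : qk * qj * star qk = star qj := by
  ext <;> simp [re_mul, imI_mul, imJ_mul, imK_mul] <;> simp [qj, qk]

theorem qi_mul_qj : qi * qj = qk := by
  ext <;> simp [re_mul, imI_mul, imJ_mul, imK_mul] <;> simp [qi, qj, qk]

theorem star_qi_mul_star_qj : star qi * star qj = qk := by
  ext <;> simp [re_mul, imI_mul, imJ_mul, imK_mul] <;> simp [qi, qj, qk]

theorem Lmap_add (x y : ℍ[ℝ] × ℍ[ℝ]) : Lmap (x + y) = Lmap x + Lmap y := by
  simp only [Lmap, Prod.fst_add, Prod.snd_add, mul_add, add_mul, Prod.mk_add_mk]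

theorem Lmap_smul (r : ℝ) (x : ℍ[ℝ] × ℍ[ℝ]) : Lmap (r • x) = r • Lmap x := by
  simp only [Lmap, Prod.smul_fst, Prod.smul_snd, mul_smul_comm, smul_mul_assoc, Prod.smul_mk]

theorem normSq_Lmap_snd (x : ℍ[ℝ] × ℍ[ℝ]) : normSq (Lmap x).2 = normSq x.2 := by
  simp [Lmap, normSq_qk]

theorem Lmap_mul_right (h : ℍ[ℝ] × ℍ[ℝ]) (q : ℍ[ℝ]) :
    Lmap (h.1 * q, h.2 * q) = ((Lmap h).1 * q, (Lmap h).2 * (qk * q * star qk)) := by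
  simp only [Lmap, mul_mul_star_of_star_mul_self star_qk_mul_qk]

/-- `L` is a real-linear isometry of ℍ² ≅ ℝ⁸ onto 𝕆 ≅ ℝ⁸ intertwining componentwise right
quaternion multiplication with octonion multiplication:
`L(h·i) = L(h)·i`, `L(h·j) = L(h)·j`, `L(h·k) = (L(h)·i)·j`. -/
theorem bryant_harvey_L :
    (∀ x y : ℍ[ℝ] × ℍ[ℝ], Lmap (x + y) = Lmap x + Lmap y) ∧
    (∀ (r : ℝ) (x : ℍ[ℝ] × ℍ[ℝ]), Lmap (r • x) = r • Lmap x) ∧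
    (∀ x : ℍ[ℝ] × ℍ[ℝ],
      normSq (Lmap x).1 + normSq (Lmap x).2 = normSq x.1 + normSq x.2) ∧
    (∀ h : ℍ[ℝ] × ℍ[ℝ], Lmap (h.1 * qi, h.2 * qi) = omul (Lmap h) oi) ∧
    (∀ h : ℍ[ℝ] × ℍ[ℝ], Lmap (h.1 * qj, h.2 * qj) = omul (Lmap h) oj) ∧
    (∀ h : ℍ[ℝ] × ℍ[ℝ],
      Lmap (h.1 * qk, h.2 * qk) = omul (omul (Lmap h) oi) oj) := by
  refine ⟨Lmap_add, Lmap_smul, fun x => ?_, fun h => ?_, fun h => ?_, fun h => ?_⟩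
  · rw [normSq_Lmap_snd]; rfl
  · rw [Lmap_mul_right, qk_mul_qi_mul_star_qk, oi, omul_mk_zero]
  · rw [Lmap_mul_right, qk_mul_qj_mul_star_qk, oj, omul_mk_zero]
  · rw [Lmap_mul_right, qk_mul_qk_mul_star_qk, oi, oj, omul_mk_zero, omul_mk_zero, mul_assoc,
      mul_assoc, qi_mul_qj, star_qi_mul_star_qj]
end
end

section
/- The Bryant–Harvey 4-form Φ_K = -(1/2)ω_{R_i}² - (1/2)ω_{R_j}² + (1/2)ω_{R_k}² on ℍ² ≅ ℝ⁸ satisfies L*Φ_{Spin(7)} = Φ_K, where L : ℍ² → 𝕆 is the linear isomorphism L(h₁,h₂) = h₁ + (k h₂ k̄)e. -/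
noncomputable section

open Quaternion

/-- The exterior algebra of (the dual of) ℝ⁸; forms on ℝ⁸ ≅ ℍ². -/
abbrev Ext8 := ExteriorAlgebra ℝ (Fin 8 → ℝ)

/-- The coordinate 1-forms (0-indexed). -/
def dx (a : Fin 8) : Ext8 := ExteriorAlgebra.ι ℝ (Pi.single a 1)

/-- The Euclidean inner product on ℍ² ≅ ℝ⁸. -/
def ipH2 (x y : ℍ[ℝ] × ℍ[ℝ]) : ℝ :=
  (x.1 * star y.1).re + (x.2 * star y.2).re

/-- The standard orthonormal basis `1, i, j, k, e, ie, je, ke` of ℍ² ≅ ℝ⁸. -/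
def qe : Fin 8 → ℍ[ℝ] × ℍ[ℝ]
  | 0 => (1, 0) | 1 => (qi, 0) | 2 => (qj, 0) | 3 => (qk, 0)
  | 4 => (0, 1) | 5 => (0, qi) | 6 => (0, qj) | 7 => (0, qk)

/-- The Kähler 2-form `ω(X,Y) = ⟨JX,Y⟩` of an endomorphism `J` of ℍ² ≅ ℝ⁸,
as an element of the exterior algebra: `ω = Σ_{a<b} ⟨J e_a, e_b⟩ dx_a ∧ dx_b`. -/
def kform (J : ℍ[ℝ] × ℍ[ℝ] → ℍ[ℝ] × ℍ[ℝ]) : Ext8 :=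
  (1/2 : ℝ) • ∑ a : Fin 8, ∑ b : Fin 8, ipH2 (J (qe a)) (qe b) • (dx a * dx b)

def w4 (a b c d : Fin 8) : Ext8 := dx a * dx b * dx c * dx d

/-- The matrix of `L` with respect to the standard bases of ℍ² and 𝕆. -/
def Lmat : Matrix (Fin 8) (Fin 8) ℝ := fun a b => ipH2 (Lmap (qe b)) (qe a)

/-- Pullback of exterior forms along `L`: the algebra morphism induced by the
transpose (dual) of `L` on the coordinate (dual) space. -/
def Lpull : Ext8 →ₐ[ℝ] Ext8 := ExteriorAlgebra.map (Matrix.toLin' Lmat.transpose)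

/-- The Cayley calibration
`Φ_{Spin(7)} = dx₁₂₃₄+dx₁₂₅₆+dx₁₃₅₇+dx₁₃₆₈-dx₁₂₇₈-dx₁₄₆₇+dx₁₄₅₈ + ⋆(same)` in the
octonion coordinates. -/
def ΦSpin7 : Ext8 :=
  w4 0 1 2 3 + w4 0 1 4 5 + w4 0 2 4 6 + w4 0 2 5 7 - w4 0 1 6 7 - w4 0 3 5 6 + w4 0 3 4 7
  + w4 4 5 6 7 + w4 2 3 6 7 + w4 1 3 5 7 + w4 1 3 4 6 - w4 2 3 4 5 - w4 1 2 4 7 + w4 1 2 5 6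

/-- Componentwise right multiplications by i, j, k on ℍ². -/
def Ri (x : ℍ[ℝ] × ℍ[ℝ]) : ℍ[ℝ] × ℍ[ℝ] := (x.1 * qi, x.2 * qi)
def Rj (x : ℍ[ℝ] × ℍ[ℝ]) : ℍ[ℝ] × ℍ[ℝ] := (x.1 * qj, x.2 * qj)
def Rk (x : ℍ[ℝ] × ℍ[ℝ]) : ℍ[ℝ] × ℍ[ℝ] := (x.1 * qk, x.2 * qk)

/-- The Bryant–Harvey 4-form `Φ_K = -(1/2)ω_{R_i}² - (1/2)ω_{R_j}² + (1/2)ω_{R_k}²`. -/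
def ΦK : Ext8 :=
  -(1/2 : ℝ) • (kform Ri)^2 - (1/2 : ℝ) • (kform Rj)^2 + (1/2 : ℝ) • (kform Rk)^2


/-!
Conjugation by `k` fixes `1, k` and negates `i, j`, so `L` is diagonal in the standard bases,
with sign `-1` exactly on `ie, je`; hence `L*` multiplies each `dx_{abcd}` by the product of
the four signs. On the other side, each `ω_J` is a sum of four decomposable 2-forms, which
commute and square to zero, so `ω_J²` is twice the sum of their six pairwise products.
Both sides are then the same combination of fourteen basic 4-forms.
-/

open ExteriorAlgebra

theorem sq_add_add_add_of_commute_of_mul_self_eq_zero {A : Type*} [Semiring A] {a b c d : A}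
    (hab : Commute a b) (hac : Commute a c) (had : Commute a d) (hbc : Commute b c)
    (hbd : Commute b d) (hcd : Commute c d)
    (ha : a * a = 0) (hb : b * b = 0) (hc : c * c = 0) (hd : d * d = 0) :
    (a + b + c + d) ^ 2 = 2 • (a * b + a * c + a * d + b * c + b * d + c * d) := by
  simp only [sq, add_mul, mul_add, ha, hb, hc, hd, ← hab.eq, ← hac.eq, ← had.eq, ← hbc.eq,
    ← hbd.eq, ← hcd.eq]
  abel

namespace ExteriorAlgebra

variable {R M : Type*} [CommRing R] [AddCommGroup M] [Module R M]

theorem ι_mul_ι_comm (x y : M) : ι R x * ι R y = -(ι R y * ι R x) :=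
  eq_neg_of_add_eq_zero_left (ι_add_mul_swap x y)

theorem commute_ι_mul_ι_ι (x y z : M) : Commute (ι R x * ι R y) (ι R z) := by
  rw [Commute, SemiconjBy, mul_assoc, ι_mul_ι_comm y z, mul_neg, ← mul_assoc, ι_mul_ι_comm x z,
    neg_mul, neg_neg, mul_assoc]

theorem commute_ι_mul_ι (x y z w : M) : Commute (ι R x * ι R y) (ι R z * ι R w) :=
  (commute_ι_mul_ι_ι x y z).mul_right (commute_ι_mul_ι_ι x y w)

theorem ι_mul_ι_mul_self (x y : M) : ι R x * ι R y * (ι R x * ι R y) = 0 := by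
  rw [← mul_assoc, (commute_ι_mul_ι_ι x y x).eq, ← mul_assoc, ι_sq_zero, zero_mul, zero_mul]

theorem map_toLin'_diagonal_ι_single {n : Type*} [Fintype n] [DecidableEq n] (d : n → R)
    (a : n) :
    map (Matrix.toLin' (Matrix.diagonal d)) (ι R (Pi.single a 1)) = d a • ι R (Pi.single a 1) := by
  rw [map_apply_ι, Matrix.toLin'_apply, Matrix.mulVec_single_one, Matrix.col_diagonal, ← map_smul,
    ← Pi.single_smul', smul_eq_mul, mul_one]

end ExteriorAlgebra

@[simp] theorem qi_re : qi.re = 0 := rfl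
@[simp] theorem qi_imI : qi.imI = 1 := rfl
@[simp] theorem qi_imJ : qi.imJ = 0 := rfl
@[simp] theorem qi_imK : qi.imK = 0 := rfl
@[simp] theorem qj_re : qj.re = 0 := rfl
@[simp] theorem qj_imI : qj.imI = 0 := rfl
@[simp] theorem qj_imJ : qj.imJ = 1 := rfl
@[simp] theorem qj_imK : qj.imK = 0 := rfl
@[simp] theorem qk_re : qk.re = 0 := rfl
@[simp] theorem qk_imI : qk.imI = 0 := rfl
@[simp] theorem qk_imJ : qk.imJ = 0 := rfl
@[simp] theorem qk_imK : qk.imK = 1 := rfl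

theorem qk_mul_mul_star_qk (q : ℍ[ℝ]) : qk * q * star qk = ⟨q.re, -q.imI, -q.imJ, q.imK⟩ := by
  ext <;> simp [Quaternion.re_mul, Quaternion.imI_mul, Quaternion.imJ_mul, Quaternion.imK_mul]

theorem ipH2_smul_left (c : ℝ) (x y : ℍ[ℝ] × ℍ[ℝ]) : ipH2 (c • x) y = c * ipH2 x y := by
  simp [ipH2, mul_add]

theorem ipH2_qe_qe (a b : Fin 8) : ipH2 (qe a) (qe b) = if a = b then 1 else 0 := by
  fin_cases a <;> fin_cases b <;> simp [ipH2, qe, Quaternion.re_mul]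

def Lsign (a : Fin 8) : ℝ := if a = 5 ∨ a = 6 then -1 else 1

theorem Lmap_qe (a : Fin 8) : Lmap (qe a) = Lsign a • qe a := by
  fin_cases a <;> ext <;> simp [Lmap, qe, qk_mul_mul_star_qk, Lsign]

theorem Lmat_eq_diagonal : Lmat = Matrix.diagonal Lsign := by
  ext a b
  rw [Lmat, Lmap_qe, ipH2_smul_left, ipH2_qe_qe, Matrix.diagonal_apply]
  by_cases h : a = b <;> simp [h, eq_comm]

theorem Lpull_dx (a : Fin 8) : Lpull (dx a) = Lsign a • dx a := by
  rw [Lpull, Lmat_eq_diagonal, Matrix.diagonal_transpose]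
  exact map_toLin'_diagonal_ι_single Lsign a

theorem Lpull_w4 (a b c d : Fin 8) :
    Lpull (w4 a b c d) = (Lsign a * Lsign b * Lsign c * Lsign d) • w4 a b c d := by
  simp only [w4, map_mul, Lpull_dx, mul_smul_comm, smul_mul_assoc, smul_smul]
  congr 1
  ring

theorem dx_mul_dx_comm (a b : Fin 8) : dx a * dx b = -(dx b * dx a) := ι_mul_ι_comm _ _

theorem commute_dx_mul_dx (a b c d : Fin 8) : Commute (dx a * dx b) (dx c * dx d) :=
  commute_ι_mul_ι _ _ _ _

theorem dx_mul_dx_mul_self (a b : Fin 8) : dx a * dx b * (dx a * dx b) = 0 :=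
  ι_mul_ι_mul_self _ _

theorem w4_swap_middle (a b c d : Fin 8) : w4 a c b d = -w4 a b c d := by
  rw [w4, w4, mul_assoc (dx a), dx_mul_dx_comm c b, mul_neg, neg_mul, ← mul_assoc]

theorem w4_cycle (a b c d : Fin 8) : w4 a d b c = w4 a b c d := by
  rw [w4_swap_middle a b d c, w4, w4, mul_assoc _ (dx d), dx_mul_dx_comm d c, mul_neg, neg_neg,
    ← mul_assoc]

theorem kform_Ri : kform Ri = dx 0 * dx 1 - dx 2 * dx 3 + dx 4 * dx 5 - dx 6 * dx 7 := by
  simp only [kform, Fin.sum_univ_eight, Ri, qe, ipH2]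
  norm_num [Quaternion.re_mul, Quaternion.imI_mul, Quaternion.imJ_mul, Quaternion.imK_mul]
  rw [dx_mul_dx_comm 1 0, dx_mul_dx_comm 3 2, dx_mul_dx_comm 5 4, dx_mul_dx_comm 7 6]
  module

theorem kform_Rj : kform Rj = dx 0 * dx 2 + dx 1 * dx 3 + dx 4 * dx 6 + dx 5 * dx 7 := by
  simp only [kform, Fin.sum_univ_eight, Rj, qe, ipH2]
  norm_num [Quaternion.re_mul, Quaternion.imI_mul, Quaternion.imJ_mul, Quaternion.imK_mul]
  rw [dx_mul_dx_comm 2 0, dx_mul_dx_comm 3 1, dx_mul_dx_comm 6 4, dx_mul_dx_comm 7 5]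
  module

theorem kform_Rk : kform Rk = dx 0 * dx 3 - dx 1 * dx 2 + dx 4 * dx 7 - dx 5 * dx 6 := by
  simp only [kform, Fin.sum_univ_eight, Rk, qe, ipH2]
  norm_num [Quaternion.re_mul, Quaternion.imI_mul, Quaternion.imJ_mul, Quaternion.imK_mul]
  rw [dx_mul_dx_comm 3 0, dx_mul_dx_comm 2 1, dx_mul_dx_comm 7 4, dx_mul_dx_comm 6 5]
  module

theorem kform_Ri_sq : kform Ri ^ 2 =
    2 • (-w4 0 1 2 3 + w4 0 1 4 5 - w4 0 1 6 7 - w4 2 3 4 5 + w4 2 3 6 7 - w4 4 5 6 7) := by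
  rw [kform_Ri, sub_eq_add_neg, sub_eq_add_neg, sq_add_add_add_of_commute_of_mul_self_eq_zero]
  · simp only [w4, mul_neg, neg_mul, neg_neg, ← mul_assoc]
    congr 1
    abel
  all_goals simp [commute_dx_mul_dx, dx_mul_dx_mul_self]

theorem kform_Rj_sq : kform Rj ^ 2 =
    2 • (-w4 0 1 2 3 + w4 0 2 4 6 + w4 0 2 5 7 + w4 1 3 4 6 + w4 1 3 5 7 - w4 4 5 6 7) := by
  rw [kform_Rj, sq_add_add_add_of_commute_of_mul_self_eq_zero]
  · simp only [← mul_assoc, ← w4.eq_1, w4_swap_middle 0 1 2 3, w4_swap_middle 4 5 6 7]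
    congr 1
    abel
  all_goals simp [commute_dx_mul_dx, dx_mul_dx_mul_self]

theorem kform_Rk_sq : kform Rk ^ 2 =
    2 • (-w4 0 1 2 3 + w4 0 3 4 7 - w4 0 3 5 6 - w4 1 2 4 7 + w4 1 2 5 6 - w4 4 5 6 7) := by
  rw [kform_Rk, sub_eq_add_neg, sub_eq_add_neg, sq_add_add_add_of_commute_of_mul_self_eq_zero]
  · simp only [mul_neg, neg_mul, neg_neg, ← mul_assoc, ← w4.eq_1, w4_cycle 0 1 2 3,
      w4_cycle 4 5 6 7]
    congr 1
    abel
  all_goals simp [commute_dx_mul_dx, dx_mul_dx_mul_self]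

/-- `L*Φ_{Spin(7)} = Φ_K`. -/
theorem bryant_harvey_pullback : Lpull ΦSpin7 = ΦK := by
  simp only [ΦSpin7, map_add, map_sub, Lpull_w4]
  norm_num [Lsign, Fin.ext_iff]
  rw [ΦK, kform_Ri_sq, kform_Rj_sq, kform_Rk_sq]
  module
end
end
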